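/- Let the activation be h-smoothly approximately ReLU with h ≤ 1. Let V = (V_1,…,V_{L+1}) and W = (W_1,…,W_{L+1}) be weight tuples with ‖V − W‖ ≤ ‖V‖/(6L+10) and ‖V‖, ‖W‖ > √(L + 1/2). For j ∈ {0,…,L+1} define T(j) = (W_1,…,W_j, V_{j+1},…,V_{L+1}). Suppose that for every j ∈ {0,…,L}, every example s, and every convex combination W̃ of T(j) and T(j+1), one has J_s(W̃) ≤ 2·J_s(T(j)) ≤ 4·J_s(V). Then ‖∇_V J(V) − ∇_W J(W)‖ ≤ 256·(L+1)·√p·J(V)·‖V‖^{3L+5}·‖V − W‖ / h. -/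

import Mathlib

open scoped BigOperators
noncomputable section

abbrev Params (L p : ℕ) := EuclideanSpace ℝ ((Fin L × Fin p × Fin p) ⊕ Fin p)

def layerMat {L p : ℕ} (w : Params L p) (ℓ : Fin L) : Matrix (Fin p) (Fin p) ℝ :=
  Matrix.of fun i j => w (Sum.inl (ℓ, i, j))

def outVec {L p : ℕ} (w : Params L p) : Fin p → ℝ := fun j => w (Sum.inr j)

def SmoothApproxReLU (φ : ℝ → ℝ) (h : ℝ) : Prop :=
  Differentiable ℝ φ ∧ φ 0 = 0 ∧
    (∀ z₁ z₂ : ℝ, |deriv φ z₁ - deriv φ z₂| ≤ (1 / h) * |z₁ - z₂|) ∧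
    (∀ z : ℝ, |deriv φ z| ≤ 1) ∧ (∀ z : ℝ, |deriv φ z * z - φ z| ≤ h / 2)

def feat {L p : ℕ} (φ : ℝ → ℝ) (w : Params L p) (x : Fin p → ℝ) : ℕ → Fin p → ℝ
  | 0 => x
  | ℓ + 1 =>
    if hl : ℓ < L then fun i => φ ((layerMat w ⟨ℓ, hl⟩).mulVec (feat φ w x ℓ) i)
    else feat φ w x ℓ

def netOut {L p : ℕ} (φ : ℝ → ℝ) (w : Params L p) (x : Fin p → ℝ) : ℝ :=
  ∑ j, outVec w j * feat φ w x L j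

def lossS {L p : ℕ} (φ : ℝ → ℝ) (x : Fin p → ℝ) (y : ℝ) (w : Params L p) : ℝ :=
  Real.log (1 + Real.exp (-(y * netOut φ w x)))

def loss {L p n : ℕ} (φ : ℝ → ℝ) (x : Fin n → Fin p → ℝ) (y : Fin n → ℝ) (w : Params L p) : ℝ :=
  (1 / (n : ℝ)) * ∑ s, lossS φ (x s) (y s) w

def enorm' {p : ℕ} (v : Fin p → ℝ) : ℝ := Real.sqrt (∑ i, v i ^ 2)

def hmax (L p : ℕ) (J1 nV1 : ℝ) : ℝ :=
  min ((L : ℝ) ^ ((L : ℝ) / 2 - 3) * Real.log (1 / J1) / (24 * Real.sqrt p * nV1 ^ L)) 1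

def alphaMax (L p : ℕ) (J1 nV1 h : ℝ) : ℝ :=
  min (h / (1024 * ((L : ℝ) + 1) ^ 2 * p * J1 * nV1 ^ (3 * L + 5)))
    (((L : ℝ) + 1 / 2) * nV1 ^ 2 /
      (2 * L * ((L : ℝ) + 3 / 4) ^ 2 * J1 * Real.log (1 / J1) ^ ((2 : ℝ) / L)))

def Qtilde (L : ℕ) (J1 nV1 α : ℝ) : ℝ :=
  (L : ℝ) * ((L : ℝ) + 3 / 4) ^ 2 * α * J1 * Real.log (1 / J1) ^ ((2 : ℝ) / L) /
    (((L : ℝ) + 1 / 2) * nV1 ^ 2)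

def lipGrad {L p : ℕ} (J : Params L p → ℝ) (v : Params L p) : ℝ :=
  Filter.limsup (fun w : Params L p => ‖gradient J v - gradient J w‖ / ‖v - w‖)
    (nhdsWithin v {v}ᶜ)

/-- The interpolating weights `T(j) = (W_1, …, W_j, V_{j+1}, …, V_{L+1})`: the first `j`
layers (paper indexing) are taken from `W` and the rest from `V`. -/
def mixParams {L p : ℕ} (V W : Params L p) (j : ℕ) : Params L p :=
  WithLp.toLp 2 fun i =>
    match i with
    | Sum.inl q => if (q.1 : ℕ) < j then W (Sum.inl q) else V (Sum.inl q)
    | Sum.inr a => if L < j then W (Sum.inr a) else V (Sum.inr a)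

/-! The gradient of the training loss is `(1/n) ∑ₛ -yₛ σ(-yₛ f_V(xₛ)) ∂_V f_V(xₛ)` with `σ` the
logistic sigmoid, and `∂_V f_V` is computed by forward differentiation through the layers.
Since `|φ z| ≤ |z|`, `|φ'| ≤ 1` and every weight matrix has Frobenius norm at most the weight
norm, an induction on depth with `b = ‖V‖ + ‖V - W‖` bounds the features by `b^ℓ`, their change
from `V` to `W` by `ℓ b^ℓ ‖V - W‖`, and the change of their directional derivatives by
`2ℓ³ b^(2ℓ+2) ‖V - W‖ / h`; this last step is where the `1/h`-Lipschitz continuity of `φ'`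
enters. The sigmoid is bounded by the softplus, i.e. by the per-example loss, and is Lipschitz
with constant the larger of its two values; `j = L`, `θ = 0` in the hypothesis gives
`J_s(W) ≤ 4 J_s(V)`, so both sigmoid factors are at most `4 J_s(V)`. Finally
`‖V - W‖ ≤ ‖V‖ / (6L + 10)` gives `b^(2L+3) ≤ (3/2) ‖V‖^(2L+3)`, and `‖V‖² > L + 1/2` absorbs
the factor `L³` into `‖V‖^(L+2)`. -/

open scoped Matrix

namespace SmoothApproxReLU

variable {φ : ℝ → ℝ} {h : ℝ}

lemma differentiable (hφ : SmoothApproxReLU φ h) : Differentiable ℝ φ := hφ.1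

lemma map_zero (hφ : SmoothApproxReLU φ h) : φ 0 = 0 := hφ.2.1

lemma abs_deriv_sub_le (hφ : SmoothApproxReLU φ h) (a c : ℝ) :
    |deriv φ a - deriv φ c| ≤ 1 / h * |a - c| := hφ.2.2.1 a c

lemma abs_deriv_le (hφ : SmoothApproxReLU φ h) (a : ℝ) : |deriv φ a| ≤ 1 := hφ.2.2.2.1 a

lemma abs_sub_le (hφ : SmoothApproxReLU φ h) (a c : ℝ) : |φ a - φ c| ≤ |a - c| := by
  simpa only [Real.norm_eq_abs, one_mul] using
    convex_univ.norm_image_sub_le_of_norm_deriv_le (C := 1) (fun z _ => hφ.differentiable z)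
      (fun z _ => by simpa only [Real.norm_eq_abs] using hφ.abs_deriv_le z)
      (Set.mem_univ c) (Set.mem_univ a)

lemma abs_le (hφ : SmoothApproxReLU φ h) (a : ℝ) : |φ a| ≤ |a| := by
  simpa only [hφ.map_zero, sub_zero] using hφ.abs_sub_le a 0

end SmoothApproxReLU

section EuclideanNorm

variable {p : ℕ}

lemma enorm'_eq_norm (v : Fin p → ℝ) : enorm' v = ‖WithLp.toLp 2 v‖ := by
  simp [enorm', EuclideanSpace.norm_eq]

lemma enorm'_nonneg (v : Fin p → ℝ) : 0 ≤ enorm' v := Real.sqrt_nonneg _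

lemma enorm'_add_le (a c : Fin p → ℝ) : enorm' (a + c) ≤ enorm' a + enorm' c := by
  simpa only [enorm'_eq_norm, WithLp.toLp_add] using norm_add_le _ _

lemma abs_le_enorm' (v : Fin p → ℝ) (i : Fin p) : |v i| ≤ enorm' v := by
  simpa [enorm'_eq_norm] using PiLp.norm_apply_le (WithLp.toLp 2 v) i

lemma enorm'_le_mul_of_abs_le {a v : Fin p → ℝ} {c : ℝ} (hc : 0 ≤ c)
    (hav : ∀ i, |a i| ≤ c * |v i|) : enorm' a ≤ c * enorm' v := by
  have hcv : enorm' (c • v) = c * enorm' v := by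
    rw [enorm'_eq_norm, WithLp.toLp_smul, norm_smul, Real.norm_of_nonneg hc, enorm'_eq_norm]
  refine hcv ▸ Real.sqrt_le_sqrt (Finset.sum_le_sum fun i _ => sq_le_sq.2 ?_)
  simpa only [Pi.smul_apply, smul_eq_mul, abs_mul, abs_of_nonneg hc] using hav i

lemma enorm'_le_of_abs_le {a v : Fin p → ℝ} (hav : ∀ i, |a i| ≤ |v i|) :
    enorm' a ≤ enorm' v := by
  simpa only [one_mul] using
    enorm'_le_mul_of_abs_le zero_le_one fun i => (hav i).trans_eq (one_mul _).symm

lemma abs_dotProduct_le (a v : Fin p → ℝ) : |a ⬝ᵥ v| ≤ enorm' a * enorm' v := by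
  simpa only [enorm'_eq_norm, EuclideanSpace.inner_toLp_toLp, star_trivial, dotProduct_comm v]
    using abs_real_inner_le_norm (WithLp.toLp 2 a) (WithLp.toLp 2 v)

end EuclideanNorm

section Params

variable {L p : ℕ}

lemma sum_sq_layerMat_le (w : Params L p) (k : Fin L) :
    ∑ i, ∑ j, layerMat w k i j ^ 2 ≤ ‖w‖ ^ 2 := by
  rw [EuclideanSpace.real_norm_sq_eq, Fintype.sum_sum_type, Fintype.sum_prod_type]
  refine le_add_of_le_of_nonneg ?_ (Finset.sum_nonneg fun _ _ => sq_nonneg _)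
  refine (Finset.single_le_sum (f := fun l => ∑ q : Fin p × Fin p, w (Sum.inl (l, q)) ^ 2)
    (fun _ _ => Finset.sum_nonneg fun _ _ => sq_nonneg _) (Finset.mem_univ k)).trans_eq' ?_
  simp [layerMat, Fintype.sum_prod_type]

lemma enorm'_layerMat_mulVec_le (w : Params L p) (k : Fin L) (v : Fin p → ℝ) :
    enorm' (layerMat w k *ᵥ v) ≤ ‖w‖ * enorm' v := by
  have hrow : ∀ i, (layerMat w k *ᵥ v) i ^ 2 ≤ (∑ j, layerMat w k i j ^ 2) * ∑ j, v j ^ 2 :=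
    fun i => Finset.sum_mul_sq_le_sq_mul_sq Finset.univ (layerMat w k i) v
  rw [enorm', enorm', Real.sqrt_le_iff]
  refine ⟨by positivity, ?_⟩
  rw [mul_pow, Real.sq_sqrt (Finset.sum_nonneg fun _ _ => sq_nonneg _)]
  calc ∑ i, (layerMat w k *ᵥ v) i ^ 2
      ≤ ∑ i, (∑ j, layerMat w k i j ^ 2) * ∑ j, v j ^ 2 := Finset.sum_le_sum fun i _ => hrow i
    _ ≤ ‖w‖ ^ 2 * ∑ j, v j ^ 2 := by
      rw [← Finset.sum_mul]
      exact mul_le_mul_of_nonneg_right (sum_sq_layerMat_le w k)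
        (Finset.sum_nonneg fun _ _ => sq_nonneg _)

lemma enorm'_outVec_le (w : Params L p) : enorm' (outVec w) ≤ ‖w‖ := by
  rw [enorm', Real.sqrt_le_left (norm_nonneg w), EuclideanSpace.real_norm_sq_eq,
    Fintype.sum_sum_type]
  exact le_add_of_nonneg_left (Finset.sum_nonneg fun _ _ => sq_nonneg _)

lemma layerMat_sub (v w : Params L p) (k : Fin L) :
    layerMat (v - w) k = layerMat v k - layerMat w k := rfl

lemma outVec_sub (v w : Params L p) : outVec (v - w) = outVec v - outVec w := rfl

lemma mixParams_of_lt (V W : Params L p) {j : ℕ} (hj : L < j) : mixParams V W j = W := by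
  ext (q | a)
  · simp [mixParams, q.1.isLt.trans hj]
  · simp [mixParams, hj]

end Params

section Network

variable {L p : ℕ}

def dfeat (φ : ℝ → ℝ) (w u : Params L p) (x : Fin p → ℝ) : ℕ → Fin p → ℝ
  | 0 => 0
  | ℓ + 1 =>
    if hl : ℓ < L then
      fun i => deriv φ ((layerMat w ⟨ℓ, hl⟩ *ᵥ feat φ w x ℓ) i) *
        (layerMat u ⟨ℓ, hl⟩ *ᵥ feat φ w x ℓ + layerMat w ⟨ℓ, hl⟩ *ᵥ dfeat φ w u x ℓ) i
    else dfeat φ w u x ℓ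

lemma feat_succ (φ : ℝ → ℝ) (w : Params L p) (x : Fin p → ℝ) {ℓ : ℕ} (hl : ℓ < L) :
    feat φ w x (ℓ + 1) = fun i => φ ((layerMat w ⟨ℓ, hl⟩ *ᵥ feat φ w x ℓ) i) := by
  rw [feat, dif_pos hl]

lemma dfeat_succ (φ : ℝ → ℝ) (w u : Params L p) (x : Fin p → ℝ) {ℓ : ℕ} (hl : ℓ < L) :
    dfeat φ w u x (ℓ + 1) = fun i => deriv φ ((layerMat w ⟨ℓ, hl⟩ *ᵥ feat φ w x ℓ) i) *
      (layerMat u ⟨ℓ, hl⟩ *ᵥ feat φ w x ℓ + layerMat w ⟨ℓ, hl⟩ *ᵥ dfeat φ w u x ℓ) i := by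
  rw [dfeat, dif_pos hl]

lemma mulVec_layerMat_apply (w : Params L p) (k : Fin L) (g : Fin p → ℝ) (i : Fin p) :
    (layerMat w k *ᵥ g) i = ∑ j, w (Sum.inl (k, i, j)) * g j := rfl

theorem hasFDerivAt_feat {φ : ℝ → ℝ} (hφ : Differentiable ℝ φ) (x : Fin p → ℝ)
    (w : Params L p) {ℓ : ℕ} (hℓ : ℓ ≤ L) :
    ∃ D : Params L p →L[ℝ] (Fin p → ℝ),
      HasFDerivAt (fun v => feat φ v x ℓ) D w ∧ ∀ u, D u = dfeat φ w u x ℓ := by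
  induction ℓ with
  | zero => exact ⟨0, hasFDerivAt_const x w, fun u => rfl⟩
  | succ ℓ ih =>
    obtain ⟨D, hD, hDu⟩ := ih (by omega)
    let k : Fin L := ⟨ℓ, hℓ⟩
    have hpre : ∀ i, ∃ P : Params L p →L[ℝ] ℝ,
        HasFDerivAt (fun v => (layerMat v k *ᵥ feat φ v x ℓ) i) P w ∧
          ∀ u, P u = (layerMat u k *ᵥ feat φ w x ℓ + layerMat w k *ᵥ dfeat φ w u x ℓ) i := by
      intro i
      simp only [Pi.add_apply, mulVec_layerMat_apply]
      refine ⟨_, .fun_sum fun j _ => (PiLp.hasFDerivAt_apply 2 w (Sum.inl (k, i, j))).fun_mul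
        (hasFDerivAt_pi'.1 hD j), fun u => ?_⟩
      simp only [sum_apply, add_apply, smul_apply, PiLp.proj_apply, smul_eq_mul,
        ContinuousLinearMap.comp_apply, ContinuousLinearMap.proj_apply, hDu,
        Finset.sum_add_distrib, mul_comm (feat φ w x ℓ _)]
      ring
    choose P hP hPu using hpre
    refine ⟨.pi fun i => deriv φ ((layerMat w k *ᵥ feat φ w x ℓ) i) • P i, ?_, fun u => ?_⟩
    · simp only [feat_succ φ _ x hℓ]
      exact hasFDerivAt_pi.2 fun i => (hφ _).hasDerivAt.comp_hasFDerivAt w (hP i)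
    · ext i
      simp only [ContinuousLinearMap.coe_pi', smul_apply, smul_eq_mul, hPu, dfeat_succ φ w u x hℓ]
      rfl

def dnetOut (φ : ℝ → ℝ) (w u : Params L p) (x : Fin p → ℝ) : ℝ :=
  outVec u ⬝ᵥ feat φ w x L + outVec w ⬝ᵥ dfeat φ w u x L

theorem hasFDerivAt_netOut {φ : ℝ → ℝ} (hφ : Differentiable ℝ φ) (x : Fin p → ℝ)
    (w : Params L p) :
    ∃ D : Params L p →L[ℝ] ℝ, HasFDerivAt (fun v => netOut φ v x) D w ∧
      ∀ u, D u = dnetOut φ w u x := by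
  obtain ⟨D, hD, hDu⟩ := hasFDerivAt_feat hφ x w le_rfl
  refine ⟨_, .fun_sum fun j _ =>
    (PiLp.hasFDerivAt_apply 2 w (Sum.inr j)).fun_mul (hasFDerivAt_pi'.1 hD j), fun u => ?_⟩
  simp only [sum_apply, add_apply, smul_apply, PiLp.proj_apply,
    ContinuousLinearMap.comp_apply, ContinuousLinearMap.proj_apply, smul_eq_mul, hDu, dnetOut,
    dotProduct, outVec, Finset.sum_add_distrib, mul_comm (feat φ w x L _)]
  ring

end Network

section Logistic

open Real

def softplus (t : ℝ) : ℝ := log (1 + exp t)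

lemma softplus_nonneg (t : ℝ) : 0 ≤ softplus t :=
  log_nonneg (by linarith [exp_nonneg t])

lemma hasDerivAt_softplus (t : ℝ) : HasDerivAt softplus (sigmoid t) t := by
  refine (((hasDerivAt_exp t).const_add 1).log (by positivity)).congr_deriv ?_
  rw [sigmoid_def, exp_neg]
  field_simp
  ring

lemma sigmoid_le_softplus (t : ℝ) : sigmoid t ≤ softplus t := by
  have h := one_sub_inv_le_log_of_pos (show 0 < 1 + exp t by positivity)
  rwa [← neg_neg t, ← sigmoid_def, ← sigmoid_neg, neg_neg] at h

lemma sigmoid_sub_sigmoid_le {a c : ℝ} (hac : a ≤ c) :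
    sigmoid c - sigmoid a ≤ sigmoid c * (c - a) := by
  refine (convex_Iic c).image_sub_le_mul_sub_of_deriv_le
    differentiable_sigmoid.continuous.continuousOn differentiable_sigmoid.differentiableOn
    (fun t ht => ?_) a hac c Set.self_mem_Iic hac
  rw [interior_Iic] at ht
  rw [deriv_sigmoid]
  nlinarith [sigmoid_nonneg t, sigmoid_le_one t, sigmoid_le ht.le]

lemma abs_sigmoid_sub_le {a c K : ℝ} (ha : sigmoid a ≤ K) (hc : sigmoid c ≤ K) :
    |sigmoid a - sigmoid c| ≤ K * |a - c| := by
  wlog hac : a ≤ c generalizing a c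
  · rw [abs_sub_comm, abs_sub_comm a]
    exact this hc ha (le_of_not_ge hac)
  rw [abs_sub_comm, abs_of_nonneg (sub_nonneg.2 (sigmoid_le hac)), abs_sub_comm,
    abs_of_nonneg (sub_nonneg.2 hac)]
  exact (sigmoid_sub_sigmoid_le hac).trans
    (mul_le_mul_of_nonneg_right hc (sub_nonneg.2 hac))

end Logistic

section Loss

variable {L p : ℕ} {φ : ℝ → ℝ}

lemma lossS_eq_softplus (x : Fin p → ℝ) (y : ℝ) (w : Params L p) :
    lossS φ x y w = softplus (-(y * netOut φ w x)) := rfl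

def dlossS (φ : ℝ → ℝ) (x : Fin p → ℝ) (y : ℝ) (w u : Params L p) : ℝ :=
  -y * Real.sigmoid (-(y * netOut φ w x)) * dnetOut φ w u x

theorem hasFDerivAt_lossS (hφ : Differentiable ℝ φ) (x : Fin p → ℝ) (y : ℝ) (w : Params L p) :
    ∃ D : Params L p →L[ℝ] ℝ, HasFDerivAt (lossS φ x y) D w ∧ ∀ u, D u = dlossS φ x y w u := by
  obtain ⟨D, hD, hDu⟩ := hasFDerivAt_netOut hφ x w
  refine ⟨_, (hasDerivAt_softplus _).comp_hasFDerivAt w (hD.const_mul y).neg, fun u => ?_⟩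
  simp only [smul_apply, neg_apply, smul_eq_mul, hDu, dlossS]
  ring

theorem fderiv_loss_apply {n : ℕ} (hφ : Differentiable ℝ φ) (x : Fin n → Fin p → ℝ)
    (y : Fin n → ℝ) (w u : Params L p) :
    fderiv ℝ (loss φ x y) w u = 1 / n * ∑ s, dlossS φ (x s) (y s) w u := by
  choose D hD hDu using fun s => hasFDerivAt_lossS hφ (x s) (y s) w
  have hloss : HasFDerivAt (loss φ x y) ((1 / (n : ℝ)) • ∑ s, D s) w :=
    (HasFDerivAt.fun_sum fun s _ => hD s).const_mul _
  rw [hloss.fderiv]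
  simp only [smul_apply, sum_apply, smul_eq_mul, hDu]

lemma loss_nonneg {n : ℕ} (φ : ℝ → ℝ) (x : Fin n → Fin p → ℝ) (y : Fin n → ℝ) (w : Params L p) :
    0 ≤ loss φ x y w :=
  mul_nonneg (by positivity) (Finset.sum_nonneg fun _ _ => softplus_nonneg _)

theorem norm_gradient_loss_sub_le {n : ℕ} {φ : ℝ → ℝ} (hφ : Differentiable ℝ φ)
    (x : Fin n → Fin p → ℝ) (y : Fin n → ℝ) {V W : Params L p} {c : ℝ} (hc : 0 ≤ c)
    (hs : ∀ s u, |dlossS φ (x s) (y s) V u - dlossS φ (x s) (y s) W u| ≤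
      c * lossS φ (x s) (y s) V * ‖u‖) :
    ‖gradient (loss φ x y) V - gradient (loss φ x y) W‖ ≤ c * loss φ x y V := by
  rw [gradient, gradient, ← map_sub, LinearIsometryEquiv.norm_map]
  refine ContinuousLinearMap.opNorm_le_bound _ (mul_nonneg hc (loss_nonneg φ x y V)) fun u => ?_
  rw [sub_apply, fderiv_loss_apply hφ, fderiv_loss_apply hφ, ← mul_sub,
    ← Finset.sum_sub_distrib, Real.norm_eq_abs, abs_mul, abs_of_nonneg (by positivity)]
  calc _ ≤ 1 / (n : ℝ) * ∑ s, c * lossS φ (x s) (y s) V * ‖u‖ := by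
        gcongr
        exact (Finset.abs_sum_le_sum_abs _ _).trans (Finset.sum_le_sum fun s _ => hs s u)
    _ = c * loss φ x y V * ‖u‖ := by
        simp only [loss, ← Finset.sum_mul, ← Finset.mul_sum]
        ring

end Loss

section Bounds

variable {L p : ℕ} {φ : ℝ → ℝ} {h : ℝ} {x : Fin p → ℝ} {b : ℝ}

lemma enorm'_deriv_mul_le (hφ : SmoothApproxReLU φ h) (z g : Fin p → ℝ) :
    enorm' (fun i => deriv φ (z i) * g i) ≤ enorm' g :=
  enorm'_le_of_abs_le fun i => by
    rw [abs_mul]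
    exact mul_le_of_le_one_left (abs_nonneg _) (hφ.abs_deriv_le _)

lemma enorm'_deriv_mul_sub_le (hφ : SmoothApproxReLU φ h) (hh0 : 0 < h) (z z' g g' : Fin p → ℝ) :
    enorm' ((fun i => deriv φ (z i) * g i) - fun i => deriv φ (z' i) * g' i) ≤
      enorm' g / h * enorm' (z - z') + enorm' (g - g') := by
  have hsplit : ((fun i => deriv φ (z i) * g i) - fun i => deriv φ (z' i) * g' i) =
      (fun i => (deriv φ (z i) - deriv φ (z' i)) * g i) +
        fun i => deriv φ (z' i) * (g - g') i := by
    ext i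
    simp only [Pi.sub_apply, Pi.add_apply]
    ring
  rw [hsplit]
  refine (enorm'_add_le _ _).trans (add_le_add ?_ (enorm'_deriv_mul_le hφ z' _))
  refine enorm'_le_mul_of_abs_le (div_nonneg (enorm'_nonneg g) hh0.le) fun i => ?_
  calc _ ≤ 1 / h * |z i - z' i| * enorm' g := by
        rw [abs_mul]
        exact mul_le_mul (hφ.abs_deriv_sub_le _ _) (abs_le_enorm' g i) (abs_nonneg _)
          (by positivity)
    _ = _ := by rw [Pi.sub_apply]; ring

lemma mul_pow_add_mul_le (hb : 1 ≤ b) {t : ℝ} (ht : 0 ≤ t) (ℓ : ℕ) :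
    t * b ^ ℓ + b * (ℓ * b ^ ℓ * t) ≤ (ℓ + 1) * b ^ (ℓ + 1) * t := by
  have : t * b ^ ℓ ≤ t * b ^ (ℓ + 1) :=
    mul_le_mul_of_nonneg_left (pow_le_pow_right₀ hb ℓ.le_succ) ht
  rw [pow_succ] at this ⊢
  linarith

lemma layerMat_mulVec_sub (w w' : Params L p) (k : Fin L) (f f' : Fin p → ℝ) :
    layerMat w k *ᵥ f - layerMat w' k *ᵥ f' =
      layerMat (w - w') k *ᵥ f + layerMat w' k *ᵥ (f - f') := by
  rw [layerMat_sub, Matrix.sub_mulVec, Matrix.mulVec_sub]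
  abel

lemma enorm'_layerMat_mulVec_add_le {u w : Params L p} (k : Fin L) {f d : Fin p → ℝ}
    {t : ℝ} {ℓ : ℕ} (hb : 1 ≤ b) (hu : ‖u‖ ≤ t) (hw : ‖w‖ ≤ b) (hf : enorm' f ≤ b ^ ℓ)
    (hd : enorm' d ≤ ℓ * b ^ ℓ * t) :
    enorm' (layerMat u k *ᵥ f + layerMat w k *ᵥ d) ≤ (ℓ + 1) * b ^ (ℓ + 1) * t := by
  refine (enorm'_add_le _ _).trans <| le_trans ?_ <|
    mul_pow_add_mul_le hb ((norm_nonneg u).trans hu) ℓ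
  gcongr
  · exact (enorm'_layerMat_mulVec_le u k f).trans
      (mul_le_mul hu hf (enorm'_nonneg f) ((norm_nonneg u).trans hu))
  · exact (enorm'_layerMat_mulVec_le w k d).trans
      (mul_le_mul hw hd (enorm'_nonneg d) (by linarith))

lemma abs_outVec_dotProduct_add_le {u w : Params L p} {f d : Fin p → ℝ} {t : ℝ} {ℓ : ℕ}
    (hb : 1 ≤ b) (hu : ‖u‖ ≤ t) (hw : ‖w‖ ≤ b) (hf : enorm' f ≤ b ^ ℓ)
    (hd : enorm' d ≤ ℓ * b ^ ℓ * t) :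
    |outVec u ⬝ᵥ f + outVec w ⬝ᵥ d| ≤ (ℓ + 1) * b ^ (ℓ + 1) * t := by
  refine (abs_add_le _ _).trans <| le_trans ?_ <|
    mul_pow_add_mul_le hb ((norm_nonneg u).trans hu) ℓ
  gcongr
  · exact (abs_dotProduct_le _ f).trans
      (mul_le_mul ((enorm'_outVec_le u).trans hu) hf (enorm'_nonneg f) ((norm_nonneg u).trans hu))
  · exact (abs_dotProduct_le _ d).trans
      (mul_le_mul ((enorm'_outVec_le w).trans hw) hd (enorm'_nonneg d) (by linarith))

lemma enorm'_feat_le (hφ : SmoothApproxReLU φ h) (hx : enorm' x ≤ 1) (hb : 1 ≤ b)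
    {w : Params L p} (hw : ‖w‖ ≤ b) {ℓ : ℕ} (hℓ : ℓ ≤ L) :
    enorm' (feat φ w x ℓ) ≤ b ^ ℓ := by
  induction ℓ with
  | zero => simpa [feat] using hx
  | succ ℓ ih =>
    rw [feat_succ φ w x hℓ, pow_succ']
    calc _ ≤ enorm' (layerMat w ⟨ℓ, hℓ⟩ *ᵥ feat φ w x ℓ) :=
          enorm'_le_of_abs_le fun i => hφ.abs_le _
      _ ≤ ‖w‖ * enorm' (feat φ w x ℓ) := enorm'_layerMat_mulVec_le _ _ _
      _ ≤ b * b ^ ℓ := mul_le_mul hw (ih (by omega)) (enorm'_nonneg _) (by linarith)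

lemma enorm'_feat_sub_le (hφ : SmoothApproxReLU φ h) (hx : enorm' x ≤ 1) (hb : 1 ≤ b)
    {w w' : Params L p} (hw : ‖w‖ ≤ b) (hw' : ‖w'‖ ≤ b) {ℓ : ℕ} (hℓ : ℓ ≤ L) :
    enorm' (feat φ w x ℓ - feat φ w' x ℓ) ≤ ℓ * b ^ ℓ * ‖w - w'‖ := by
  induction ℓ with
  | zero => simp [feat, enorm']
  | succ ℓ ih =>
    let k : Fin L := ⟨ℓ, hℓ⟩
    push_cast
    calc enorm' (feat φ w x (ℓ + 1) - feat φ w' x (ℓ + 1))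
        ≤ enorm' (layerMat w k *ᵥ feat φ w x ℓ - layerMat w' k *ᵥ feat φ w' x ℓ) := by
          refine enorm'_le_of_abs_le fun i => ?_
          simpa only [feat_succ φ _ x hℓ, Pi.sub_apply] using hφ.abs_sub_le _ _
      _ ≤ _ := by
        rw [layerMat_mulVec_sub]
        exact enorm'_layerMat_mulVec_add_le k hb le_rfl hw'
          (enorm'_feat_le hφ hx hb hw (by omega)) (ih (by omega))

lemma enorm'_dfeat_le (hφ : SmoothApproxReLU φ h) (hx : enorm' x ≤ 1) (hb : 1 ≤ b)
    {w : Params L p} (hw : ‖w‖ ≤ b) (u : Params L p) {ℓ : ℕ} (hℓ : ℓ ≤ L) :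
    enorm' (dfeat φ w u x ℓ) ≤ ℓ * b ^ ℓ * ‖u‖ := by
  induction ℓ with
  | zero => simp [dfeat, enorm']
  | succ ℓ ih =>
    rw [dfeat_succ φ w u x hℓ]
    push_cast
    exact (enorm'_deriv_mul_le hφ _ _).trans <| enorm'_layerMat_mulVec_add_le _ hb le_rfl hw
      (enorm'_feat_le hφ hx hb hw (by omega)) (ih (by omega))

lemma dfeat_sub_step_le {G Z U D : ℝ} (ℓ : ℕ) (hh0 : 0 < h) (hh1 : h ≤ 1) (hb : 1 ≤ b)
    (hU : 0 ≤ U) (hD : 0 ≤ D) (hZ0 : 0 ≤ Z) (hG : G ≤ (ℓ + 1) * b ^ (ℓ + 1) * U)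
    (hZ : Z ≤ (ℓ + 1) * b ^ (ℓ + 1) * D) :
    G / h * Z + (U * (ℓ * b ^ ℓ * D) + (D * (ℓ * b ^ ℓ * U) +
        b * (2 / h * ℓ ^ 3 * b ^ (2 * ℓ + 2) * U * D))) ≤
      2 / h * (ℓ + 1) ^ 3 * b ^ (2 * ℓ + 4) * U * D := by
  have hc : 1 ≤ 1 / h := one_le_one_div hh0 hh1
  rw [div_eq_mul_one_div G, div_eq_mul_one_div 2, mul_comm G]
  generalize 1 / h = c at *
  have hb0 : 0 ≤ b := by linarith
  obtain ⟨Q, hQ⟩ : ∃ Q, Q = c * b ^ (2 * ℓ + 4) * (U * D) := ⟨_, rfl⟩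
  have hQ0 : 0 ≤ Q := hQ ▸ by positivity
  have h1 : c * G * Z ≤ (ℓ + 1) ^ 2 * Q := by
    calc c * G * Z ≤ c * (((ℓ + 1) * b ^ (ℓ + 1) * U) * ((ℓ + 1) * b ^ (ℓ + 1) * D)) := by
          rw [mul_assoc]; gcongr
      _ = (ℓ + 1) ^ 2 * (c * b ^ (2 * ℓ + 2) * (U * D)) := by ring
      _ ≤ (ℓ + 1) ^ 2 * Q := by
          rw [hQ]; gcongr; omega
  have h2 : U * (ℓ * b ^ ℓ * D) + D * (ℓ * b ^ ℓ * U) ≤ 2 * ℓ * Q := by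
    calc _ = 2 * ℓ * (U * D) * b ^ ℓ := by ring
      _ ≤ 2 * ℓ * (U * D) * (c * b ^ (2 * ℓ + 4)) := by
          gcongr
          exact (pow_le_pow_right₀ hb (by omega)).trans (le_mul_of_one_le_left (by positivity) hc)
      _ = 2 * ℓ * Q := by rw [hQ]; ring
  have h3 : b * (2 * c * ℓ ^ 3 * b ^ (2 * ℓ + 2) * U * D) ≤ 2 * ℓ ^ 3 * Q := by
    calc _ = 2 * c * ℓ ^ 3 * (U * D) * b ^ (2 * ℓ + 3) := by ring
      _ ≤ 2 * c * ℓ ^ 3 * (U * D) * b ^ (2 * ℓ + 4) := by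
          gcongr; omega
      _ = 2 * ℓ ^ 3 * Q := by rw [hQ]; ring
  have h4 : 0 ≤ (5 * ℓ ^ 2 + 2 * ℓ + 1 : ℝ) * Q := by positivity
  calc _ ≤ (ℓ + 1) ^ 2 * Q + (2 * ℓ * Q + 2 * ℓ ^ 3 * Q) := by linarith
    _ ≤ 2 * (ℓ + 1) ^ 3 * Q := by nlinarith
    _ = _ := by rw [hQ]; ring

lemma enorm'_dfeat_sub_le (hφ : SmoothApproxReLU φ h) (hh0 : 0 < h) (hh1 : h ≤ 1)
    (hx : enorm' x ≤ 1) (hb : 1 ≤ b) {w w' : Params L p} (hw : ‖w‖ ≤ b) (hw' : ‖w'‖ ≤ b)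
    (u : Params L p) {ℓ : ℕ} (hℓ : ℓ ≤ L) :
    enorm' (dfeat φ w u x ℓ - dfeat φ w' u x ℓ) ≤
      2 / h * ℓ ^ 3 * b ^ (2 * ℓ + 2) * ‖u‖ * ‖w - w'‖ := by
  induction ℓ with
  | zero => simp [dfeat, enorm']
  | succ ℓ ih =>
    let k : Fin L := ⟨ℓ, hℓ⟩
    set f := feat φ w x ℓ
    set f' := feat φ w' x ℓ
    set d := dfeat φ w u x ℓ
    set d' := dfeat φ w' u x ℓ
    have hz : enorm' (layerMat w k *ᵥ f - layerMat w' k *ᵥ f') ≤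
        (ℓ + 1) * b ^ (ℓ + 1) * ‖w - w'‖ := by
      rw [layerMat_mulVec_sub]
      exact enorm'_layerMat_mulVec_add_le k hb le_rfl hw'
        (enorm'_feat_le hφ hx hb hw (by omega)) (enorm'_feat_sub_le hφ hx hb hw hw' (by omega))
    have hg : enorm' (layerMat u k *ᵥ f + layerMat w k *ᵥ d) ≤ (ℓ + 1) * b ^ (ℓ + 1) * ‖u‖ :=
      enorm'_layerMat_mulVec_add_le k hb le_rfl hw (enorm'_feat_le hφ hx hb hw (by omega))
        (enorm'_dfeat_le hφ hx hb hw u (by omega))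
    have hgg : enorm' (layerMat u k *ᵥ f + layerMat w k *ᵥ d -
          (layerMat u k *ᵥ f' + layerMat w' k *ᵥ d')) ≤
        ‖u‖ * (ℓ * b ^ ℓ * ‖w - w'‖) + (‖w - w'‖ * (ℓ * b ^ ℓ * ‖u‖) +
          b * (2 / h * ℓ ^ 3 * b ^ (2 * ℓ + 2) * ‖u‖ * ‖w - w'‖)) := by
      rw [add_sub_add_comm, ← Matrix.mulVec_sub, layerMat_mulVec_sub]
      refine (enorm'_add_le _ _).trans
        (add_le_add ?_ ((enorm'_add_le _ _).trans (add_le_add ?_ ?_))) <;>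
        refine (enorm'_layerMat_mulVec_le _ _ _).trans ?_
      · exact mul_le_mul_of_nonneg_left (enorm'_feat_sub_le hφ hx hb hw hw' (by omega))
          (norm_nonneg _)
      · exact mul_le_mul_of_nonneg_left (enorm'_dfeat_le hφ hx hb hw u (by omega))
          (norm_nonneg _)
      · exact mul_le_mul hw' (ih (by omega)) (enorm'_nonneg _) (by linarith)
    rw [dfeat_succ φ w u x hℓ, dfeat_succ φ w' u x hℓ, show 2 * (ℓ + 1) + 2 = 2 * ℓ + 4 by ring]
    push_cast
    exact (enorm'_deriv_mul_sub_le hφ hh0 _ _ _ _).trans <| (add_le_add le_rfl hgg).trans <|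
      dfeat_sub_step_le ℓ hh0 hh1 hb (norm_nonneg u) (norm_nonneg _) (enorm'_nonneg _) hg hz

end Bounds

section OutputBounds

variable {L p : ℕ} {φ : ℝ → ℝ} {h : ℝ} {x : Fin p → ℝ} {b : ℝ}

lemma abs_netOut_sub_le (hφ : SmoothApproxReLU φ h) (hx : enorm' x ≤ 1) (hb : 1 ≤ b)
    {V W : Params L p} (hV : ‖V‖ ≤ b) (hW : ‖W‖ ≤ b) :
    |netOut φ V x - netOut φ W x| ≤ (L + 1) * b ^ (L + 1) * ‖V - W‖ := by
  have hsplit : netOut φ V x - netOut φ W x =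
      outVec (V - W) ⬝ᵥ feat φ V x L + outVec W ⬝ᵥ (feat φ V x L - feat φ W x L) := by
    rw [outVec_sub, sub_dotProduct, dotProduct_sub]
    exact (sub_add_sub_cancel _ _ _).symm
  rw [hsplit]
  exact abs_outVec_dotProduct_add_le hb le_rfl hW (enorm'_feat_le hφ hx hb hV le_rfl)
    (enorm'_feat_sub_le hφ hx hb hV hW le_rfl)

lemma abs_dnetOut_le (hφ : SmoothApproxReLU φ h) (hx : enorm' x ≤ 1) (hb : 1 ≤ b)
    {V : Params L p} (hV : ‖V‖ ≤ b) (u : Params L p) :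
    |dnetOut φ V u x| ≤ (L + 1) * b ^ (L + 1) * ‖u‖ :=
  abs_outVec_dotProduct_add_le hb le_rfl hV (enorm'_feat_le hφ hx hb hV le_rfl)
    (enorm'_dfeat_le hφ hx hb hV u le_rfl)

lemma abs_dnetOut_sub_le (hφ : SmoothApproxReLU φ h) (hh0 : 0 < h) (hh1 : h ≤ 1)
    (hx : enorm' x ≤ 1) (hb : 1 ≤ b) {V W : Params L p} (hV : ‖V‖ ≤ b) (hW : ‖W‖ ≤ b)
    (u : Params L p) :
    |dnetOut φ V u x - dnetOut φ W u x| ≤ 4 / h * L ^ 3 * b ^ (2 * L + 3) * ‖u‖ * ‖V - W‖ := by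
  have hsplit : dnetOut φ V u x - dnetOut φ W u x =
      outVec u ⬝ᵥ (feat φ V x L - feat φ W x L) + (outVec (V - W) ⬝ᵥ dfeat φ V u x L +
        outVec W ⬝ᵥ (dfeat φ V u x L - dfeat φ W u x L)) := by
    simp only [dnetOut, outVec_sub, sub_dotProduct, dotProduct_sub]
    ring
  have hdot : ∀ (v : Params L p) (f : Fin p → ℝ), |outVec v ⬝ᵥ f| ≤ ‖v‖ * enorm' f :=
    fun v f => (abs_dotProduct_le _ f).trans
      (mul_le_mul_of_nonneg_right (enorm'_outVec_le v) (enorm'_nonneg f))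
  rw [hsplit]
  refine (abs_add_le _ _).trans <| (add_le_add (hdot _ _) <| (abs_add_le _ _).trans <|
    add_le_add (hdot _ _) (hdot _ _)).trans ?_
  have hL : 2 * ((L : ℝ) * b ^ L) ≤ 2 / h * L ^ 3 * b ^ (2 * L + 3) := by
    calc 2 * ((L : ℝ) * b ^ L) ≤ 2 * (L ^ 3 * b ^ (2 * L + 3)) := by
          gcongr
          · exact_mod_cast Nat.le_self_pow (by norm_num) L
          · omega
      _ ≤ 1 / h * (2 * (L ^ 3 * b ^ (2 * L + 3))) :=
          le_mul_of_one_le_left (by positivity) (one_le_one_div hh0 hh1)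
      _ = _ := by ring
  calc _ ≤ ‖u‖ * (L * b ^ L * ‖V - W‖) + (‖V - W‖ * (L * b ^ L * ‖u‖) +
        b * (2 / h * L ^ 3 * b ^ (2 * L + 2) * ‖u‖ * ‖V - W‖)) := by
        gcongr
        exacts [enorm'_feat_sub_le hφ hx hb hV hW le_rfl, enorm'_dfeat_le hφ hx hb hV u le_rfl,
          enorm'_nonneg _, enorm'_dfeat_sub_le hφ hh0 hh1 hx hb hV hW u le_rfl]
    _ = 2 * (L * b ^ L) * (‖u‖ * ‖V - W‖) +
        2 / h * L ^ 3 * b ^ (2 * L + 3) * (‖u‖ * ‖V - W‖) := by ring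
    _ ≤ 2 / h * L ^ 3 * b ^ (2 * L + 3) * (‖u‖ * ‖V - W‖) +
        2 / h * L ^ 3 * b ^ (2 * L + 3) * (‖u‖ * ‖V - W‖) := by gcongr
    _ = _ := by ring

end OutputBounds

section LossBounds

variable {L p : ℕ} {φ : ℝ → ℝ} {h : ℝ} {b : ℝ}

lemma succ_sq_mul_pow_le (hL : 1 ≤ L) (hh0 : 0 < h) (hh1 : h ≤ 1) (hb : 1 ≤ b) :
    ((L : ℝ) + 1) ^ 2 * b ^ (2 * L + 2) ≤ 4 / h * L ^ 3 * b ^ (2 * L + 3) := by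
  have hL1 : (1 : ℝ) ≤ L := by exact_mod_cast hL
  have hL3 : ((L : ℝ) + 1) ^ 2 ≤ 4 * L ^ 3 := by
    nlinarith [mul_le_mul_of_nonneg_left hL1 (sq_nonneg (L : ℝ))]
  calc ((L : ℝ) + 1) ^ 2 * b ^ (2 * L + 2) ≤ 4 * L ^ 3 * b ^ (2 * L + 3) :=
        mul_le_mul hL3 (pow_le_pow_right₀ hb (by omega)) (by positivity) (by positivity)
    _ ≤ 1 / h * (4 * L ^ 3 * b ^ (2 * L + 3)) :=
        le_mul_of_one_le_left (by positivity) (one_le_one_div hh0 hh1)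
    _ = _ := by ring

lemma abs_dlossS_sub_le (hL : 1 ≤ L) (hφ : SmoothApproxReLU φ h) (hh0 : 0 < h) (hh1 : h ≤ 1)
    {x : Fin p → ℝ} (hx : enorm' x ≤ 1) {y : ℝ} (hy : |y| ≤ 1) (hb : 1 ≤ b)
    {V W : Params L p} (hV : ‖V‖ ≤ b) (hW : ‖W‖ ≤ b)
    (hloss : lossS φ x y W ≤ 4 * lossS φ x y V) (u : Params L p) :
    |dlossS φ x y V u - dlossS φ x y W u| ≤
      32 / h * L ^ 3 * b ^ (2 * L + 3) * ‖V - W‖ * lossS φ x y V * ‖u‖ := by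
  set J := lossS φ x y V
  set sV := Real.sigmoid (-(y * netOut φ V x))
  set sW := Real.sigmoid (-(y * netOut φ W x))
  have hJ : 0 ≤ J := softplus_nonneg _
  have hsV : sV ≤ 4 * J := (sigmoid_le_softplus _).trans (by rw [← lossS_eq_softplus]; linarith)
  have hsW : sW ≤ 4 * J := (sigmoid_le_softplus _).trans (by rwa [← lossS_eq_softplus])
  have hsig : |sV - sW| ≤ 4 * J * ((L + 1) * b ^ (L + 1) * ‖V - W‖) := by
    refine (abs_sigmoid_sub_le hsV hsW).trans (mul_le_mul_of_nonneg_left ?_ (by positivity))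
    rw [neg_sub_neg, ← mul_sub, abs_mul, abs_sub_comm]
    exact (mul_le_of_le_one_left (abs_nonneg _) hy).trans (abs_netOut_sub_le hφ hx hb hV hW)
  have hsplit : dlossS φ x y V u - dlossS φ x y W u =
      -y * ((sV - sW) * dnetOut φ V u x + sW * (dnetOut φ V u x - dnetOut φ W u x)) := by
    simp only [dlossS, sV, sW]
    ring
  rw [hsplit, abs_mul, abs_neg]
  refine (mul_le_of_le_one_left (abs_nonneg _) hy).trans ?_
  calc _ ≤ |sV - sW| * |dnetOut φ V u x| + sW * |dnetOut φ V u x - dnetOut φ W u x| := by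
        refine (abs_add_le _ _).trans_eq ?_
        rw [abs_mul, abs_mul, abs_of_nonneg (Real.sigmoid_nonneg _)]
    _ ≤ 4 * J * ((L + 1) * b ^ (L + 1) * ‖V - W‖) * ((L + 1) * b ^ (L + 1) * ‖u‖) +
        4 * J * (4 / h * L ^ 3 * b ^ (2 * L + 3) * ‖u‖ * ‖V - W‖) := by
        gcongr
        exacts [abs_dnetOut_le hφ hx hb hV u, abs_dnetOut_sub_le hφ hh0 hh1 hx hb hV hW u]
    _ = 4 * (((L : ℝ) + 1) ^ 2 * b ^ (2 * L + 2)) * (J * ‖u‖ * ‖V - W‖) +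
        16 / h * L ^ 3 * b ^ (2 * L + 3) * (J * ‖u‖ * ‖V - W‖) := by ring
    _ ≤ 4 * (4 / h * L ^ 3 * b ^ (2 * L + 3)) * (J * ‖u‖ * ‖V - W‖) +
        16 / h * L ^ 3 * b ^ (2 * L + 3) * (J * ‖u‖ * ‖V - W‖) := by
        gcongr 4 * ?_ * _ + _
        exact succ_sq_mul_pow_le hL hh0 hh1 hb
    _ = _ := by ring

end LossBounds

section Constants

lemma one_add_pow_le_three_halves (L : ℕ) : (1 + 1 / (6 * L + 10 : ℝ)) ^ (2 * L + 3) ≤ 3 / 2 := by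
  have hL : (0 : ℝ) ≤ L := L.cast_nonneg
  have he : ((2 * L + 3 : ℕ) : ℝ) * (1 / (6 * L + 10)) ≤ 1 / 3 := by
    push_cast
    rw [mul_one_div, div_le_div_iff₀ (by positivity) (by norm_num)]
    linarith
  calc (1 + 1 / (6 * L + 10 : ℝ)) ^ (2 * L + 3)
      ≤ Real.exp (1 / (6 * L + 10)) ^ (2 * L + 3) := by
        gcongr
        linarith [Real.add_one_le_exp (1 / (6 * L + 10 : ℝ))]
    _ = Real.exp (((2 * L + 3 : ℕ) : ℝ) * (1 / (6 * L + 10))) := (Real.exp_nat_mul _ _).symm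
    _ ≤ 1 / (1 - ((2 * L + 3 : ℕ) : ℝ) * (1 / (6 * L + 10))) :=
        Real.exp_bound_div_one_sub_of_interval (by positivity) (by linarith)
    _ ≤ 3 / 2 := by
        rw [div_le_div_iff₀ (by linarith) (by norm_num)]
        linarith

lemma three_mul_cube_le {L : ℕ} {B : ℝ} (hL : 1 ≤ L) (hB1 : 1 ≤ B) (hB : L + 1 / 2 < B ^ 2) :
    3 * (L : ℝ) ^ 3 ≤ 16 * (L + 1) * B ^ (L + 2) := by
  rcases hL.eq_or_lt with rfl | hL2
  · norm_num
    nlinarith [one_le_pow₀ (n := 3) hB1]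
  · have hLB : (L : ℝ) ^ 2 ≤ B ^ (L + 2) := by
      refine le_trans ?_ (pow_le_pow_right₀ hB1 (show 4 ≤ L + 2 by omega))
      nlinarith [L.cast_nonneg (α := ℝ)]
    nlinarith [L.cast_nonneg (α := ℝ)]

lemma cube_mul_pow_add_le {L : ℕ} {B D : ℝ} (hL : 1 ≤ L) (hB0 : 0 ≤ B) (hB : L + 1 / 2 < B ^ 2)
    (hD0 : 0 ≤ D) (hD : D ≤ B / (6 * L + 10)) :
    32 * (L : ℝ) ^ 3 * (B + D) ^ (2 * L + 3) ≤ 256 * (L + 1) * B ^ (3 * L + 5) := by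
  have hL1 : (1 : ℝ) ≤ L := by exact_mod_cast hL
  have hB1 : 1 ≤ B := by nlinarith
  have hBD : (B + D) ^ (2 * L + 3) ≤ 3 / 2 * B ^ (2 * L + 3) := by
    calc (B + D) ^ (2 * L + 3) ≤ (B * (1 + 1 / (6 * L + 10))) ^ (2 * L + 3) := by
          gcongr
          rw [mul_one_add, mul_one_div]
          linarith
      _ ≤ B ^ (2 * L + 3) * (3 / 2) := by
          rw [mul_pow]
          gcongr
          exact one_add_pow_le_three_halves L
      _ = _ := mul_comm _ _
  calc 32 * (L : ℝ) ^ 3 * (B + D) ^ (2 * L + 3)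
      ≤ 32 * L ^ 3 * (3 / 2 * B ^ (2 * L + 3)) := by gcongr
    _ = 16 * (3 * L ^ 3) * B ^ (2 * L + 3) := by ring
    _ ≤ 16 * (16 * (L + 1) * B ^ (L + 2)) * B ^ (2 * L + 3) := by
        gcongr 16 * ?_ * _
        exact three_mul_cube_le hL hB1 hB
    _ = _ := by ring

end Constants

theorem statement18_general
    (L p n : ℕ) (hL : 1 ≤ L) (hp : 1 ≤ p)
    (φ : ℝ → ℝ) (h : ℝ) (hh0 : 0 < h) (hh1 : h ≤ 1) (hφ : SmoothApproxReLU φ h)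
    (x : Fin n → Fin p → ℝ) (y : Fin n → ℝ)
    (hx : ∀ s, enorm' (x s) = 1) (hy : ∀ s, y s = 1 ∨ y s = -1)
    (V W : Params L p)
    (hclose : ‖V - W‖ ≤ ‖V‖ / (6 * (L : ℝ) + 10))
    (hV : Real.sqrt ((L : ℝ) + 1 / 2) < ‖V‖)
    (hJ : ∀ j : ℕ, j ≤ L → ∀ s : Fin n, ∀ θ : ℝ, θ ∈ Set.Icc (0 : ℝ) 1 →
      lossS φ (x s) (y s) (θ • mixParams V W j + (1 - θ) • mixParams V W (j + 1)) ≤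
          2 * lossS φ (x s) (y s) (mixParams V W j) ∧
        2 * lossS φ (x s) (y s) (mixParams V W j) ≤ 4 * lossS φ (x s) (y s) V) :
    ‖gradient (loss φ x y) V - gradient (loss φ x y) W‖ ≤
      256 * ((L : ℝ) + 1) * Real.sqrt p * loss φ x y V * ‖V‖ ^ (3 * L + 5) *
        ‖V - W‖ / h := by
  have hlossW : ∀ s, lossS φ (x s) (y s) W ≤ 4 * lossS φ (x s) (y s) V := fun s => by
    have hJL := hJ L le_rfl s 0 ⟨le_rfl, zero_le_one⟩
    rw [zero_smul, zero_add, sub_zero, one_smul, mixParams_of_lt V W L.lt_succ_self] at hJL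
    linarith [hJL.1, hJL.2]
  have hV1 : 1 ≤ ‖V‖ :=
    (Real.one_le_sqrt.2 (by linarith [show (1 : ℝ) ≤ L by exact_mod_cast hL])).trans hV.le
  have hV2 : (L : ℝ) + 1 / 2 < ‖V‖ ^ 2 := (Real.sqrt_lt' (by positivity)).1 hV
  set b := ‖V‖ + ‖V - W‖
  have hb : 1 ≤ b := hV1.trans (le_add_of_nonneg_right (norm_nonneg _))
  have hgrad := norm_gradient_loss_sub_le hφ.differentiable x y (by positivity) fun s u =>
    abs_dlossS_sub_le hL hφ hh0 hh1 (hx s).le (by rcases hy s with hys | hys <;> simp [hys]) hb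
      (le_add_of_nonneg_right (norm_nonneg _)) (norm_le_norm_add_norm_sub V W) (hlossW s) u
  have hnum := cube_mul_pow_add_le hL (norm_nonneg V) hV2 (norm_nonneg _) hclose
  have hsqrt : 1 ≤ Real.sqrt p := Real.one_le_sqrt.2 (by exact_mod_cast hp)
  refine hgrad.trans ?_
  calc 32 / h * L ^ 3 * b ^ (2 * L + 3) * ‖V - W‖ * loss φ x y V
      = (32 * L ^ 3 * b ^ (2 * L + 3)) * (loss φ x y V * ‖V - W‖ / h) := by ring
    _ ≤ (256 * (L + 1) * ‖V‖ ^ (3 * L + 5)) * Real.sqrt p * (loss φ x y V * ‖V - W‖ / h) := by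
        have := loss_nonneg φ x y V
        gcongr ?_ * _
        exact hnum.trans (le_mul_of_one_le_right (by positivity) hsqrt)
    _ = _ := by ring

/-- Lemma `l:nabla.smooth`: bound on the change of the gradient of the
training loss between two nearby weight tuples `V` and `W`, assuming control of the
per-example losses along the layer-by-layer interpolation `T(j) = mixParams V W j`. -/
theorem statement18
    (L p n : ℕ) (hL : 1 ≤ L) (hn : 1 ≤ n) (hp : 1 ≤ p)
    (φ : ℝ → ℝ) (h : ℝ) (hh0 : 0 < h) (hh1 : h ≤ 1) (hφ : SmoothApproxReLU φ h)
    (x : Fin n → Fin p → ℝ) (y : Fin n → ℝ)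
    (hx : ∀ s, enorm' (x s) = 1) (hy : ∀ s, y s = 1 ∨ y s = -1)
    (V W : Params L p)
    (hclose : ‖V - W‖ ≤ ‖V‖ / (6 * (L : ℝ) + 10))
    (hV : Real.sqrt ((L : ℝ) + 1 / 2) < ‖V‖) (hW : Real.sqrt ((L : ℝ) + 1 / 2) < ‖W‖)
    (hJ : ∀ j : ℕ, j ≤ L → ∀ s : Fin n, ∀ θ : ℝ, θ ∈ Set.Icc (0 : ℝ) 1 →
      lossS φ (x s) (y s) (θ • mixParams V W j + (1 - θ) • mixParams V W (j + 1)) ≤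
          2 * lossS φ (x s) (y s) (mixParams V W j) ∧
        2 * lossS φ (x s) (y s) (mixParams V W j) ≤ 4 * lossS φ (x s) (y s) V) :
    ‖gradient (loss φ x y) V - gradient (loss φ x y) W‖ ≤
      256 * ((L : ℝ) + 1) * Real.sqrt p * loss φ x y V * ‖V‖ ^ (3 * L + 5) *
        ‖V - W‖ / h :=
  statement18_general L p n hL hp φ h hh0 hh1 hφ x y hx hy V W hclose hV hJ
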